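/- Let k be a field of characteristic zero, let K ≥ 2 be an even integer, set n = 4K, and let X = Z_n be the dihedral quandle (x▷y = 2y − x in Z_n). Then every derivation D of the quandle algebra k[X], with matrix coefficients defined by D(e_t) = Σ_x c_t^x e_x, satisfies the symmetry c_t^x = c_{t+K}^{x+K} for all t, x ∈ Z_n. -/

import Mathlib

/-- The quandle algebra multiplication on `X →₀ k`, as a bilinear map,
determined on basis vectors by `e_x · e_y = e_{op x y}`. -/
noncomputable def qmul {k X : Type*} [Field k] (op : X → X → X) :
    (X →₀ k) →ₗ[k] (X →₀ k) →ₗ[k] (X →₀ k) :=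
  Finsupp.lsum k fun x =>
    LinearMap.toSpanSingleton k ((X →₀ k) →ₗ[k] (X →₀ k))
      (Finsupp.lsum k fun y =>
        LinearMap.toSpanSingleton k (X →₀ k) (Finsupp.single (op x y) (1 : k)))

/-- A derivation of the quandle algebra: a linear map satisfying the Leibniz rule. -/
def IsDerivation {k X : Type*} [Field k] (op : X → X → X)
    (D : (X →₀ k) →ₗ[k] (X →₀ k)) : Prop :=
  ∀ a b : X →₀ k, D (qmul op a b) = qmul op (D a) b + qmul op a (D b)

/-!
Evaluating the Leibniz rule for `e_x · e_y` at `e_u` gives a linear relation among the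
coefficients which depends on the parity of `u + x`: for `u + x = 2z` it involves both solutions
`z` and `z + n/2` of `2w = u + x`, for `u + x` odd only one other coefficient. Summing a solution
of these relations with shift `2s` over the pairs `{z, z + s}` in the second argument gives a
solution with shift `s`. Writing `K = 2m`, three such sums starting from `c` (shift `4m = n/2`)
produce a function that is `m`-periodic in both arguments, hence invariant under the diagonal
shift `(t, x) ↦ (t + m, x + m)`. Each of the sums is odd under the reflection `z ↦ 2y - z` in
its second argument, so its values at odd distance `x - t` vanish and its values at distance `2w`
are half of those of the next sum at distance `w`; this carries the diagonal invariance back down to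
the first sum, and the two relations for `c` then turn it into invariance of `c` under the shift
by `2m = K`.
-/

namespace ZMod

variable {n : ℕ}

theorem exists_eq_two_mul_or_eq_two_mul_add_one (w : ZMod n) :
    ∃ d, w = 2 * d ∨ w = 2 * d + 1 := by
  obtain ⟨i, rfl⟩ := intCast_surjective w
  obtain ⟨d, rfl | rfl⟩ := Int.even_or_odd' i
  exacts [⟨d, Or.inl (by push_cast; ring)⟩, ⟨d, Or.inr (by push_cast; ring)⟩]

theorem two_mul_ne_one (hn : 2 ∣ n) (d : ZMod n) : 2 * d ≠ 1 := by
  intro h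
  have h₂ := congrArg (castHom hn (ZMod 2)) h
  rw [map_mul, map_one, map_ofNat] at h₂
  revert h₂
  generalize castHom hn (ZMod 2) d = e
  decide +revert

theorem two_mul_eq_zero_iff {h : ℕ} (hn : n = 2 * h) {d : ZMod n} :
    2 * d = 0 ↔ d = 0 ∨ d = h := by
  have hh : (2 * h : ZMod n) = 0 := by
    subst hn; exact_mod_cast natCast_self (2 * h)
  refine ⟨fun hd => ?_, by rintro (rfl | rfl) <;> simp [hh]⟩
  obtain ⟨i, rfl⟩ := intCast_surjective d
  have hdvd : (n : ℤ) ∣ 2 * i := (intCast_zmod_eq_zero_iff_dvd _ _).1 (by exact_mod_cast hd)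
  obtain ⟨j, rfl⟩ : (h : ℤ) ∣ i := by
    subst hn; push_cast at hdvd; exact (mul_dvd_mul_iff_left two_ne_zero).1 hdvd
  obtain ⟨l, rfl | rfl⟩ := Int.even_or_odd' j
  · left; push_cast; linear_combination (l : ZMod n) * hh
  · right; push_cast; linear_combination (l : ZMod n) * hh

end ZMod

section QuandleAlgebra

open Finsupp

variable {k X : Type*} [Field k] (op : X → X → X)

theorem qmul_single_single (x y : X) :
    qmul op (single x (1 : k)) (single y 1) = single (op x y) 1 := by
  simp [qmul]

theorem qmul_single_right (a : X →₀ k) (y : X) :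
    qmul op a (single y 1) = a.mapDomain (fun x => op x y) := by
  induction a using Finsupp.induction_linear with
  | zero => simp
  | add a b ha hb => simp [ha, hb, mapDomain_add]
  | single x r => simp [qmul, mapDomain_single]

theorem qmul_single_left (x : X) (b : X →₀ k) :
    qmul op (single x 1) b = b.mapDomain (op x) := by
  induction b using Finsupp.induction_linear with
  | zero => simp
  | add a b ha hb => simp [ha, hb, mapDomain_add]
  | single y r => simp [qmul, mapDomain_single]

variable {op}

theorem IsDerivation.apply_single_op {D : (X →₀ k) →ₗ[k] (X →₀ k)}
    (hD : IsDerivation op D) (x y : X) : D (single (op x y) 1) =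
      (D (single x 1)).mapDomain (fun w => op w y) + (D (single y 1)).mapDomain (op x) := by
  rw [← qmul_single_single, hD, qmul_single_right, qmul_single_left]

end QuandleAlgebra

open Function

section Relations

variable {R k : Type*} [CommRing R]

def DiagInvariant (a : R) (f : R → R → k) : Prop :=
  ∀ t w, f (t + a) (t + a + w) = f t (t + w)

theorem DiagInvariant.of_periodic {a : R} {f : R → R → k} (hl : Periodic f a)
    (hr : ∀ y, Periodic (f y) a) : DiagInvariant a f := by
  intro t w
  rw [hl, add_right_comm, hr]

-- The coefficient of `e_{2z + 1 - x}` in `D (e_x · e_y)`, for `n` even.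
def LeibnizOdd (f : R → R → k) : Prop :=
  ∀ x y z, f (2 * y - x) (2 * z + 1 - x) = f x (2 * y - 2 * z - 1 + x)

theorem LeibnizOdd.apply_add_two_mul {f : R → R → k} (hf : LeibnizOdd f) (t a d : R) :
    f (t + 2 * a) (t + 2 * a + (2 * d + 1)) = f t (t - (2 * d + 1)) := by
  convert hf t (t + a) (t + a + d) using 2 <;> ring

variable [CommRing k]

-- The coefficient of `e_{2z - x}` in `D (e_x · e_y)`; `s` plays the role of `n / 2`.
def LeibnizEven (s : R) (f : R → R → k) : Prop :=
  ∀ x y z, f (2 * y - x) (2 * z - x) = f x (2 * y - 2 * z + x) + f y z + f y (z + s)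

def shiftSum (s : R) (f : R → R → k) : R → R → k := fun y z => f y z + f y (z + s)

def ReflectionOdd (f : R → R → k) : Prop := ∀ y z, f y (2 * y - z) = -f y z

structure LeibnizSystem (s : R) (f : R → R → k) : Prop where
  even : LeibnizEven s f
  odd : LeibnizOdd f
  periodic_left : Periodic f (2 * s)
  periodic_right : ∀ y, Periodic (f y) (2 * s)

variable {s : R} {f : R → R → k}

theorem LeibnizEven.apply_add_two_mul (hf : LeibnizEven s f) (t a d : R) :
    f (t + 2 * a) (t + 2 * a + 2 * d) = f t (t - 2 * d) + shiftSum s f (t + a) (t + a + d) := by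
  rw [shiftSum, ← add_assoc]
  convert hf t (t + a) (t + a + d) using 4 <;> ring

theorem LeibnizEven.reflectionOdd_shiftSum (hf : LeibnizEven s f) :
    ReflectionOdd (shiftSum s f) := by
  intro y z
  have h₁ := hf 0 y z
  have h₂ := hf (2 * y) y (2 * y - z)
  rw [show 2 * (2 * y - z) - 2 * y = 2 * y - 2 * z by ring,
    show 2 * y - 2 * (2 * y - z) + 2 * y = 2 * z by ring] at h₂
  simp only [shiftSum, sub_zero, add_zero, sub_self] at h₁ h₂ ⊢
  linear_combination -h₁ - h₂

theorem LeibnizEven.shiftSum_two_mul (hf : LeibnizEven (2 * s) f)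
    (hp : ∀ y, Periodic (f y) (2 * (2 * s))) : LeibnizEven s (shiftSum (2 * s) f) := by
  intro x y z
  have h₁ := hf x y z
  have h₂ := hf x y (z + s)
  have h₃ := hp x (2 * y - 2 * (z + s) + x)
  rw [show 2 * (z + s) - x = 2 * z - x + 2 * s by ring] at h₂
  rw [show 2 * y - 2 * (z + s) + x + 2 * (2 * s) = 2 * y - 2 * z + x + 2 * s by ring] at h₃
  simp only [shiftSum]
  linear_combination h₁ + h₂ - h₃

theorem LeibnizOdd.shiftSum_two_mul (hf : LeibnizOdd f)
    (hp : ∀ y, Periodic (f y) (2 * (2 * s))) : LeibnizOdd (shiftSum (2 * s) f) := by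
  intro x y z
  have h₁ := hf x y z
  have h₂ := hf x y (z + s)
  have h₃ := hp x (2 * y - 2 * (z + s) - 1 + x)
  rw [show 2 * (z + s) + 1 - x = 2 * z + 1 - x + 2 * s by ring] at h₂
  rw [show 2 * y - 2 * (z + s) - 1 + x + 2 * (2 * s) = 2 * y - 2 * z - 1 + x + 2 * s by ring]
    at h₃
  simp only [shiftSum]
  linear_combination h₁ + h₂ - h₃

theorem periodic_shiftSum_right (hp : ∀ y, Periodic (f y) (2 * s)) (y : R) :
    Periodic (shiftSum s f y) s := by
  intro z
  simp only [shiftSum, add_assoc, ← two_mul, hp y z]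
  ring

theorem LeibnizEven.periodic_shiftSum_left (hf : LeibnizEven s f) (hl : Periodic f (2 * s))
    (hr : ∀ y, Periodic (f y) (2 * s)) : Periodic (shiftSum s f) s := by
  intro y
  funext z
  have h₁ := hf 0 y z
  have h₂ := hf 0 (y + s) z
  simp only [sub_zero, add_zero] at h₁ h₂
  rw [mul_add, hl, show 2 * y + 2 * s - 2 * z = 2 * y - 2 * z + 2 * s by ring, hr] at h₂
  simp only [shiftSum]
  linear_combination h₁ - h₂

theorem LeibnizSystem.shiftSum_two_mul (hf : LeibnizSystem (2 * s) f) :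
    LeibnizSystem s (shiftSum (2 * s) f) where
  even := hf.even.shiftSum_two_mul hf.periodic_right
  odd := hf.odd.shiftSum_two_mul hf.periodic_right
  periodic_left := hf.even.periodic_shiftSum_left hf.periodic_left hf.periodic_right
  periodic_right := periodic_shiftSum_right hf.periodic_right

theorem LeibnizSystem.diagInvariant_shiftSum (hf : LeibnizSystem s f) :
    DiagInvariant s (shiftSum s f) :=
  .of_periodic (hf.even.periodic_shiftSum_left hf.periodic_left hf.periodic_right)
    (periodic_shiftSum_right hf.periodic_right)

theorem LeibnizEven.two_mul_apply_add_two_mul (hf : LeibnizEven s f) (ha : ReflectionOdd f)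
    (x w : R) : 2 * f x (x + 2 * w) = shiftSum s f x (x + w) := by
  have h₁ := hf.apply_add_two_mul x 0 w
  have h₂ := ha x (x + 2 * w)
  rw [show 2 * x - (x + 2 * w) = x - 2 * w by ring] at h₂
  simp only [mul_zero, add_zero] at h₁
  linear_combination h₁ + h₂

theorem LeibnizOdd.apply_add_two_mul_add_one [NoZeroDivisors k] [NeZero (2 : k)]
    (hf : LeibnizOdd f) (ha : ReflectionOdd f) (y d : R) : f y (y + (2 * d + 1)) = 0 := by
  have h₁ := hf.apply_add_two_mul y 0 d
  have h₂ := ha y (y + (2 * d + 1))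
  rw [show 2 * y - (y + (2 * d + 1)) = y - (2 * d + 1) by ring] at h₂
  simp only [mul_zero, add_zero] at h₁
  have h₃ : (2 : k) * f y (y + (2 * d + 1)) = 0 := by linear_combination h₁ + h₂
  exact (mul_eq_zero.1 h₃).resolve_left two_ne_zero

end Relations

section DiagonalShift

variable {k : Type*} [CommRing k] {n : ℕ} {s a : ZMod n} {f : ZMod n → ZMod n → k}

theorem DiagInvariant.two_mul_of_shiftSum (he : LeibnizEven s f) (ho : LeibnizOdd f)
    (hg : DiagInvariant a (shiftSum s f)) : DiagInvariant (2 * a) f := by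
  intro t w
  obtain ⟨d, rfl | rfl⟩ := ZMod.exists_eq_two_mul_or_eq_two_mul_add_one w
  · have h₀ := he.apply_add_two_mul t 0 d
    simp only [mul_zero, add_zero] at h₀
    rw [he.apply_add_two_mul, hg, h₀]
  · have h₀ := ho.apply_add_two_mul t 0 d
    simp only [mul_zero, add_zero] at h₀
    rw [ho.apply_add_two_mul, h₀]

theorem DiagInvariant.of_shiftSum [NoZeroDivisors k] [NeZero (2 : k)] (he : LeibnizEven s f)
    (ho : LeibnizOdd f) (ha : ReflectionOdd f) (hg : DiagInvariant a (shiftSum s f)) :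
    DiagInvariant a f := by
  intro t w
  obtain ⟨d, rfl | rfl⟩ := ZMod.exists_eq_two_mul_or_eq_two_mul_add_one w
  · refine mul_left_cancel₀ (two_ne_zero : (2 : k) ≠ 0) ?_
    rw [he.two_mul_apply_add_two_mul ha, he.two_mul_apply_add_two_mul ha, hg]
  · rw [ho.apply_add_two_mul_add_one ha, ho.apply_add_two_mul_add_one ha]

end DiagonalShift

section Dihedral

open Finsupp

theorem Finsupp.mapDomain_apply_eq_sum_filter {α β M : Type*} [Fintype α] [DecidableEq β]
    [AddCommMonoid M] (f : α → β) (b : α →₀ M) (u : β) :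
    b.mapDomain f u = ∑ w with f w = u, b w := by
  rw [mapDomain, sum_apply, sum_fintype _ _ (by simp), Finset.sum_filter]
  simp [single_apply]

variable {R M : Type*} [CommRing R] [AddCommMonoid M] {n h : ℕ}

theorem Finsupp.mapDomain_reflect_apply (a : R →₀ M) (y u : R) :
    a.mapDomain (fun w => 2 * y - w) u = a (2 * y - u) := by
  conv_lhs => rw [show u = 2 * y - (2 * y - u) by ring]
  exact mapDomain_apply (sub_right_injective (b := 2 * y)) a _

theorem Finsupp.mapDomain_two_mul_sub_apply_two_mul_sub [NeZero n] (hn : n = 2 * h)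
    (b : ZMod n →₀ M) (x z : ZMod n) :
    b.mapDomain (fun w => 2 * w - x) (2 * z - x) = b z + b (z + h) := by
  have hfib : ({w | 2 * w - x = 2 * z - x} : Finset (ZMod n)) = {z, z + h} := by
    ext w
    simp [← sub_eq_zero (a := 2 * w), ← mul_sub, ZMod.two_mul_eq_zero_iff hn, sub_eq_iff_eq_add,
      add_comm]
  have hh : (h : ZMod n) ≠ 0 := by
    have hpos : 0 < h := by have := NeZero.ne n; omega
    rw [ne_eq, ZMod.natCast_eq_zero_iff, hn]
    exact fun hdvd => by have := Nat.le_of_dvd hpos hdvd; omega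
  rw [mapDomain_apply_eq_sum_filter, hfib, Finset.sum_pair (by simpa using hh)]

theorem Finsupp.mapDomain_two_mul_sub_apply_two_mul_add_one_sub (hn : 2 ∣ n)
    (b : ZMod n →₀ M) (x z : ZMod n) : b.mapDomain (fun w => 2 * w - x) (2 * z + 1 - x) = 0 :=
  mapDomain_of_notMem_range _ _ fun ⟨w, hw⟩ =>
    ZMod.two_mul_ne_one hn (w - z) (by linear_combination hw)

theorem IsDerivation.leibnizSystem_dihedral {k : Type*} [Field k] [NeZero n] (hn : n = 2 * h)
    {D : (ZMod n →₀ k) →ₗ[k] (ZMod n →₀ k)}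
    (hD : IsDerivation (fun x y : ZMod n => 2 * y - x) D) :
    LeibnizSystem (h : ZMod n) fun t u => D (single t 1) u := by
  have hh : 2 * (h : ZMod n) = 0 := by
    subst hn; exact_mod_cast ZMod.natCast_self (2 * h)
  refine ⟨fun x y z => ?_, fun x y z => ?_, ?_, fun y => ?_⟩
  · have := DFunLike.congr_fun (hD.apply_single_op x y) (2 * z - x)
    rw [Finsupp.add_apply, mapDomain_reflect_apply, mapDomain_two_mul_sub_apply_two_mul_sub hn]
      at this
    rw [this, show 2 * y - (2 * z - x) = 2 * y - 2 * z + x by ring, add_assoc]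
  · have := DFunLike.congr_fun (hD.apply_single_op x y) (2 * z + 1 - x)
    rw [Finsupp.add_apply, mapDomain_reflect_apply,
      mapDomain_two_mul_sub_apply_two_mul_add_one_sub ⟨h, hn⟩] at this
    rw [this, show 2 * y - (2 * z + 1 - x) = 2 * y - 2 * z - 1 + x by ring, add_zero]
  · rw [hh]; exact periodic_with_period_zero _
  · rw [hh]; exact periodic_with_period_zero _

end Dihedral

/-- For the dihedral quandle `Z_n` with `n = 4K`, `K ≥ 2` even, over a field of characteristic
zero, the matrix coefficients of any derivation satisfy `c_t^x = c_{t+K}^{x+K}`. -/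
theorem dihedral_4k_even_derivation_shift {k : Type*} [Field k] [CharZero k]
    (K : ℕ) (hK : 2 ≤ K) (hKeven : Even K)
    (D : (ZMod (4 * K) →₀ k) →ₗ[k] (ZMod (4 * K) →₀ k))
    (hD : IsDerivation (fun x y : ZMod (4 * K) => 2 * y - x) D)
    (c : ZMod (4 * K) → ZMod (4 * K) → k)
    (hc : ∀ t u, D (Finsupp.single t 1) u = c t u) :
    ∀ t x : ZMod (4 * K),
      c t x = c (t + (K : ZMod (4 * K))) (x + (K : ZMod (4 * K))) := by
  obtain ⟨m, rfl⟩ := hKeven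
  have : NeZero (4 * (m + m)) := ⟨by omega⟩
  set μ : ZMod (4 * (m + m)) := (m : ZMod (4 * (m + m)))
  have hc' : c = fun t u => D (Finsupp.single t 1) u := funext₂ fun t u => (hc t u).symm
  have h₀ : LeibnizSystem (2 * (2 * μ)) c := by
    rw [hc', show 2 * (2 * μ) = ((2 * (m + m) : ℕ) : ZMod (4 * (m + m))) by push_cast; ring]
    exact hD.leibnizSystem_dihedral (by ring)
  have h₁ := h₀.shiftSum_two_mul
  have h₂ := h₁.shiftSum_two_mul
  have d₂ := h₂.diagInvariant_shiftSum.of_shiftSum h₂.even h₂.odd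
    h₁.even.reflectionOdd_shiftSum
  have d₁ := d₂.of_shiftSum h₁.even h₁.odd h₀.even.reflectionOdd_shiftSum
  have d₀ := d₁.two_mul_of_shiftSum h₀.even h₀.odd
  intro t x
  convert (d₀ t (x - t)).symm using 2 <;> push_cast [μ] <;> ring
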